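/- Assume α₁, α₂, α₃ > 0. Then for every differentiable x : [0,∞) → ℝ³ with x'(t) = b(x(t)) for all t ≥ 0 and x(0) ≠ 0, one has ‖x(t)‖² → 1 as t → ∞. That is, the invariant unit sphere S² is a global attractor of the system in ℝ³ ∖ {0}. -/

import Mathlib

open scoped RealInnerProductSpace

/-- The cubic Kolmogorov vector field on `ℝ³` (modelled as `EuclideanSpace ℝ (Fin 3)`):
`b(x)₁ = x₁(α₁ − α₁x₁² − (α₁+α₂+d₁)x₂² + d₂x₃²)`,
`b(x)₂ = x₂(α₂ + d₁x₁² − α₂x₂² − (α₂+α₃+d₃)x₃²)`,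
`b(x)₃ = x₃(α₃ − (α₃+α₁+d₂)x₁² + d₃x₂² − α₃x₃²)`. -/
noncomputable def bVF (α₁ α₂ α₃ d₁ d₂ d₃ : ℝ) (x : EuclideanSpace ℝ (Fin 3)) :
    EuclideanSpace ℝ (Fin 3) :=
  (WithLp.equiv 2 (Fin 3 → ℝ)).symm
    ![x 0 * (α₁ - α₁ * (x 0)^2 - (α₁ + α₂ + d₁) * (x 1)^2 + d₂ * (x 2)^2),
      x 1 * (α₂ + d₁ * (x 0)^2 - α₂ * (x 1)^2 - (α₂ + α₃ + d₃) * (x 2)^2),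
      x 2 * (α₃ - (α₃ + α₁ + d₂) * (x 0)^2 + d₃ * (x 1)^2 - α₃ * (x 2)^2)]

open Filter Set Real Topology

/-!
`V = ‖x‖²` obeys `V' = 2 W (1 - V)` with `W = ∑ αᵢ xᵢ² ≥ (min αᵢ) V`. Since `V' > 0` wherever
`0 < V < 1`, `V` never drops below `c = min (V 0) 1 / 2`; then `W ≥ (min αᵢ) c > 0`, so
`((V - 1)²)' = -4 W (V - 1)²` forces exponential decay of `(V - 1)²` by Grönwall's inequality.
-/

section LogisticType

variable {V g : ℝ → ℝ}

theorem le_of_hasDerivAt_mul_one_sub (hV : ∀ t, 0 ≤ t → HasDerivAt V (g t * (1 - V t)) t)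
    (hg : ∀ t, 0 ≤ t → 0 < V t → 0 < g t) {c : ℝ} (hc : 0 < c) (hc₁ : c < 1) (h₀ : c ≤ V 0)
    {t : ℝ} (ht : 0 ≤ t) : c ≤ V t := by
  have key : -V t ≤ -c := by
    refine image_le_of_deriv_right_lt_deriv_boundary (f := fun s => -V s)
      (f' := fun s => -(g s * (1 - V s))) (B := fun _ => -c) (B' := fun _ => 0)
      (fun s hs => (hV s hs.1).continuousAt.continuousWithinAt.neg)
      (fun s hs => (hV s hs.1).hasDerivWithinAt.neg) (neg_le_neg h₀)
      (fun _ => hasDerivAt_const _ _) ?_ ⟨ht, le_rfl⟩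
    intro s hs hVs
    have hVs : V s = c := neg_injective hVs
    have : 0 < g s * (1 - V s) := mul_pos (hg s hs.1 (hVs ▸ hc)) (by linarith)
    linarith
  linarith

theorem sq_sub_one_le_of_hasDerivAt_mul_one_sub
    (hV : ∀ t, 0 ≤ t → HasDerivAt V (g t * (1 - V t)) t) {k : ℝ} (hg : ∀ t, 0 ≤ t → k ≤ g t)
    {t : ℝ} (ht : 0 ≤ t) : (V t - 1) ^ 2 ≤ (V 0 - 1) ^ 2 * exp (-(2 * k) * t) := by
  have hsq : ∀ s, 0 ≤ s → HasDerivAt (fun s => (V s - 1) ^ 2) (-(2 * g s) * (V s - 1) ^ 2) s :=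
    fun s hs => (((hV s hs).sub_const 1).pow 2).congr_deriv (by ring)
  have := le_gronwallBound_of_liminf_deriv_right_le (K := -(2 * k)) (ε := 0) (b := t)
    (fun s hs => (hsq s hs.1).continuousAt.continuousWithinAt)
    (fun s hs _ hr => (hsq s hs.1).hasDerivWithinAt.liminf_right_slope_le hr) le_rfl
    (fun s hs => by nlinarith [hg s hs.1, sq_nonneg (V s - 1)]) t ⟨ht, le_rfl⟩
  simpa only [neg_mul, sub_zero, gronwallBound_ε0] using this

theorem tendsto_one_of_hasDerivAt_mul_one_sub
    (hV : ∀ t, 0 ≤ t → HasDerivAt V (g t * (1 - V t)) t) {m : ℝ} (hm : 0 < m)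
    (hg : ∀ t, 0 ≤ t → m * V t ≤ g t) (h₀ : 0 < V 0) : Tendsto V atTop (𝓝 1) := by
  obtain ⟨c, hc, hc₁, hcV⟩ : ∃ c, 0 < c ∧ c < 1 ∧ c ≤ V 0 :=
    ⟨min (V 0) 1 / 2, by positivity, by linarith [min_le_right (V 0) 1],
      by linarith [min_le_left (V 0) 1, min_le_right (V 0) 1]⟩
  have hlow : ∀ t, 0 ≤ t → c ≤ V t := fun t ht =>
    le_of_hasDerivAt_mul_one_sub hV (fun s hs hVs => by nlinarith [hg s hs]) hc hc₁ hcV ht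
  have hdecay : ∀ t, 0 ≤ t → (V t - 1) ^ 2 ≤ (V 0 - 1) ^ 2 * exp (-(2 * (m * c)) * t) :=
    fun t ht => sq_sub_one_le_of_hasDerivAt_mul_one_sub hV
      (fun s hs => (mul_le_mul_of_nonneg_left (hlow s hs) hm.le).trans (hg s hs)) ht
  have hexp : Tendsto (fun t => (V 0 - 1) ^ 2 * exp (-(2 * (m * c)) * t)) atTop (𝓝 0) := by
    simpa using (tendsto_exp_atBot.comp
      (tendsto_id.const_mul_atTop_of_neg (by nlinarith : -(2 * (m * c)) < 0))).const_mul
      ((V 0 - 1) ^ 2)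
  have hsq : Tendsto (fun t => (V t - 1) ^ 2) atTop (𝓝 0) :=
    squeeze_zero' (Eventually.of_forall fun t => sq_nonneg _)
      ((eventually_ge_atTop 0).mono hdecay) hexp
  have habs : Tendsto (fun t => |V t - 1|) atTop (𝓝 0) := by
    simpa [sqrt_sq_eq_abs] using hsq.sqrt
  exact tendsto_iff_norm_sub_tendsto_zero.2 habs

end LogisticType

def weightedSqNorm {ι : Type*} [Fintype ι] (a : ι → ℝ) (x : EuclideanSpace ℝ ι) : ℝ :=
  ∑ i, a i * x i ^ 2

theorem mul_norm_sq_le_weightedSqNorm {ι : Type*} [Fintype ι] {a : ι → ℝ} {m : ℝ}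
    (h : ∀ i, m ≤ a i) (x : EuclideanSpace ℝ ι) : m * ‖x‖ ^ 2 ≤ weightedSqNorm a x := by
  rw [EuclideanSpace.real_norm_sq_eq, Finset.mul_sum]
  exact Finset.sum_le_sum fun i _ => mul_le_mul_of_nonneg_right (h i) (sq_nonneg _)

theorem inner_bVF (α₁ α₂ α₃ d₁ d₂ d₃ : ℝ) (x : EuclideanSpace ℝ (Fin 3)) :
    ⟪x, bVF α₁ α₂ α₃ d₁ d₂ d₃ x⟫ = weightedSqNorm ![α₁, α₂, α₃] x * (1 - ‖x‖ ^ 2) := by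
  rw [EuclideanSpace.real_norm_sq_eq, PiLp.inner_apply]
  simp only [bVF, WithLp.equiv_symm_apply, RCLike.inner_apply, ringHom_apply, Fin.sum_univ_three,
    Matrix.cons_val_zero, Matrix.cons_val_one, Matrix.cons_val, weightedSqNorm]
  ring

/-- If `αᵢ > 0`, the invariant unit sphere is a global attractor in `ℝ³ \\ {0}`:
`‖x(t)‖² → 1` for every solution with `x(0) ≠ 0`. -/
theorem sphere_global_attractor (α₁ α₂ α₃ d₁ d₂ d₃ : ℝ)
    (hα₁ : 0 < α₁) (hα₂ : 0 < α₂) (hα₃ : 0 < α₃)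
    (x : ℝ → EuclideanSpace ℝ (Fin 3))
    (hx : ∀ t : ℝ, 0 ≤ t → HasDerivAt x (bVF α₁ α₂ α₃ d₁ d₂ d₃ (x t)) t)
    (h0 : x 0 ≠ 0) :
    Filter.Tendsto (fun t => ‖x t‖ ^ 2) Filter.atTop (nhds 1) := by
  refine tendsto_one_of_hasDerivAt_mul_one_sub
    (g := fun t => 2 * weightedSqNorm ![α₁, α₂, α₃] (x t)) (m := 2 * min α₁ (min α₂ α₃))
    (fun t ht => ?_) (by positivity) (fun t _ => ?_) (by positivity)
  · simpa only [inner_bVF, mul_assoc] using (hx t ht).norm_sq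
  · have hmin : ∀ i, min α₁ (min α₂ α₃) ≤ ![α₁, α₂, α₃] i := by
      intro i; fin_cases i <;> simp
    linarith [mul_norm_sq_le_weightedSqNorm hmin (x t)]
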